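/- arXiv:1803.05996 — 2 statements merged into one kernel-verified Lean document; each statement's English description precedes it below -/
import Mathlib

section
/- Let G = (V,E_c) be an undirected simple graph on V = {1,…,n} with no isolated vertices, with maximal cliques C_1,…,C_p, and suppose the cardinality of the largest maximal clique of G is h. Define the graph Ĝ on vertex set {1,…,3n} with edge set Ê = E_c ∪ {(i, i+n), (i, i+2n), (i+n, i+2n) : i = 1,…,n}, where each vertex i+n is adjacent only to i and i+2n, and each vertex i+2n is adjacent only to i and i+n. Then the maximal cliques of Ĝ are exactly C_1,…,C_p together with the n three-element sets {i, i+n, i+2n} for i = 1,…,n; in particular Ĝ has p + n maximal cliques, and the cardinality of the largest maximal clique of Ĝ is max{h, 3}. -/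
/-- A maximal clique of a simple graph: a clique not contained in any other clique. -/
def IsMaxClique {V : Type*} (G : SimpleGraph V) (s : Finset V) : Prop :=
  G.IsClique ↑s ∧ ∀ t : Finset V, G.IsClique ↑t → s ⊆ t → s = t

/-- Let `G` be a graph on `{1,…,n}` (`n ≥ 1`, modelled as the first copy in
`Fin n ⊕ Fin n ⊕ Fin n`) with no isolated vertices, maximal cliques `C_1, …, C_p`, and
largest maximal clique of cardinality `h`. Let `Ĝ` be the graph on `{1,…,3n}` obtained
from `G` by joining each vertex `i + n` (modelled as `Sum.inr (Sum.inl i)`) only to `i`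
and `i + 2n`, and each vertex `i + 2n` (modelled as `Sum.inr (Sum.inr i)`) only to `i`
and `i + n`. Then the maximal cliques of `Ĝ` are exactly `C_1, …, C_p` together with the
`n` three-element sets `{i, i+n, i+2n}`; in particular `Ĝ` has `p + n` maximal cliques,
and the cardinality of its largest maximal clique is `max h 3`. -/
theorem maximal_cliques_hinf_extension
    {n p h : ℕ} (hn : 0 < n) (G : SimpleGraph (Fin n))
    (hiso : ∀ i : Fin n, ∃ j, G.Adj i j)
    (C : Fin p → Finset (Fin n)) (hCinj : Function.Injective C)
    (hC : ∀ s : Finset (Fin n), IsMaxClique G s ↔ ∃ k, s = C k)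
    (hhub : ∀ k, (C k).card ≤ h) (hhex : ∃ k, (C k).card = h)
    (Ghat : SimpleGraph (Fin n ⊕ Fin n ⊕ Fin n))
    (h11 : ∀ i j : Fin n, Ghat.Adj (Sum.inl i) (Sum.inl j) ↔ G.Adj i j)
    (h12 : ∀ i j : Fin n, Ghat.Adj (Sum.inl i) (Sum.inr (Sum.inl j)) ↔ i = j)
    (h13 : ∀ i j : Fin n, Ghat.Adj (Sum.inl i) (Sum.inr (Sum.inr j)) ↔ i = j)
    (h23 : ∀ i j : Fin n, Ghat.Adj (Sum.inr (Sum.inl i)) (Sum.inr (Sum.inr j)) ↔ i = j)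
    (h22 : ∀ i j : Fin n, ¬ Ghat.Adj (Sum.inr (Sum.inl i)) (Sum.inr (Sum.inl j)))
    (h33 : ∀ i j : Fin n, ¬ Ghat.Adj (Sum.inr (Sum.inr i)) (Sum.inr (Sum.inr j))) :
    (∀ s : Finset (Fin n ⊕ Fin n ⊕ Fin n), IsMaxClique Ghat s ↔
      ((∃ k : Fin p, s = (C k).image Sum.inl) ∨
       (∃ i : Fin n, s = {Sum.inl i, Sum.inr (Sum.inl i), Sum.inr (Sum.inr i)}))) ∧
    {s : Finset (Fin n ⊕ Fin n ⊕ Fin n) | IsMaxClique Ghat s}.ncard = p + n ∧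
    (∀ s : Finset (Fin n ⊕ Fin n ⊕ Fin n), IsMaxClique Ghat s → s.card ≤ max h 3) ∧
    (∃ s : Finset (Fin n ⊕ Fin n ⊕ Fin n), IsMaxClique Ghat s ∧ s.card = max h 3) := by
  classical
  set tri : Fin n → Finset (Fin n ⊕ Fin n ⊕ Fin n) :=
    fun i => {Sum.inl i, Sum.inr (Sum.inl i), Sum.inr (Sum.inr i)} with htri_def
  -- every maximal clique of G has two distinct elements
  have hGpair : ∀ s : Finset (Fin n), IsMaxClique G s → ∃ a ∈ s, ∃ b ∈ s, a ≠ b := by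
    intro s hs
    by_contra hcon
    push_neg at hcon
    rcases Finset.eq_empty_or_nonempty s with he | ⟨a, ha⟩
    · obtain ⟨j, hj⟩ := hiso ⟨0, hn⟩
      have hclique : G.IsClique ↑({(⟨0, hn⟩ : Fin n), j} : Finset (Fin n)) := by
        rw [Finset.coe_insert, Finset.coe_singleton]
        exact SimpleGraph.isClique_pair.mpr fun _ => hj
      have := hs.2 _ hclique (by simp [he])
      rw [he] at this
      exact absurd this.symm (by simp)
    · obtain ⟨j, hj⟩ := hiso a
      have hclique : G.IsClique ↑({a, j} : Finset (Fin n)) := by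
        rw [Finset.coe_insert, Finset.coe_singleton]
        exact SimpleGraph.isClique_pair.mpr fun _ => hj
      have hsub : s ⊆ {a, j} := by
        intro x hx
        have := hcon x hx a ha
        simp [this]
      have heq := hs.2 _ hclique hsub
      have hjs : j ∈ s := heq ▸ (by simp)
      exact G.ne_of_adj hj (hcon a ha j hjs)
  -- clique transfer lemmas
  have himg : ∀ t : Finset (Fin n), G.IsClique ↑t → Ghat.IsClique ((t.image Sum.inl : Finset (Fin n ⊕ Fin n ⊕ Fin n)) : Set (Fin n ⊕ Fin n ⊕ Fin n)) := by
    intro t ht x hx y hy hne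
    simp only [Finset.coe_image, Set.mem_image, Finset.mem_coe] at hx hy
    obtain ⟨a, ha, rfl⟩ := hx
    obtain ⟨b, hb, rfl⟩ := hy
    exact (h11 a b).mpr (ht ha hb fun hab => hne (by rw [hab]))
  have htri_clique : ∀ i : Fin n, Ghat.IsClique ↑(tri i) := by
    intro i x hx y hy hne
    have e1 : Ghat.Adj (Sum.inl i) (Sum.inr (Sum.inl i)) := (h12 i i).mpr rfl
    have e2 : Ghat.Adj (Sum.inl i) (Sum.inr (Sum.inr i)) := (h13 i i).mpr rfl
    have e3 : Ghat.Adj (Sum.inr (Sum.inl i)) (Sum.inr (Sum.inr i)) := (h23 i i).mpr rfl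
    simp only [htri_def, Finset.coe_insert, Set.mem_insert_iff, Finset.coe_singleton,
      Set.mem_singleton_iff] at hx hy
    rcases hx with rfl | rfl | rfl <;> rcases hy with rfl | rfl | rfl <;>
      first
        | exact absurd rfl hne
        | assumption
        | exact Ghat.adj_symm e1
        | exact Ghat.adj_symm e2
        | exact Ghat.adj_symm e3
  -- triangle maximality
  have htri_max : ∀ i : Fin n, IsMaxClique Ghat (tri i) := by
    intro i
    refine ⟨htri_clique i, fun t ht hsub => ?_⟩
    have h1 : Sum.inr (Sum.inl i) ∈ t := hsub (by simp [htri_def])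
    have h2 : Sum.inr (Sum.inr i) ∈ t := hsub (by simp [htri_def])
    refine Finset.Subset.antisymm hsub ?_
    intro x hx
    match x with
    | Sum.inl j =>
      have hadj : Ghat.Adj (Sum.inl j) (Sum.inr (Sum.inl i)) :=
        ht hx h1 (by simp)
      have : j = i := (h12 j i).mp hadj
      simp [htri_def, this]
    | Sum.inr (Sum.inl j) =>
      by_cases hji : j = i
      · simp [htri_def, hji]
      · exact absurd (ht hx h1 (by simp [hji])) (h22 j i)
    | Sum.inr (Sum.inr j) =>
      by_cases hji : j = i
      · simp [htri_def, hji]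
      · exact absurd (ht hx h2 (by simp [hji])) (h33 j i)
  -- image maximality
  have himg_max : ∀ k : Fin p, IsMaxClique Ghat ((C k).image Sum.inl) := by
    intro k
    have hCk : IsMaxClique G (C k) := (hC (C k)).mpr ⟨k, rfl⟩
    obtain ⟨a, ha, b, hb, hab⟩ := hGpair _ hCk
    refine ⟨himg _ hCk.1, fun t ht hsub => ?_⟩
    have hat : Sum.inl a ∈ t := hsub (Finset.mem_image_of_mem _ ha)
    have hbt : Sum.inl b ∈ t := hsub (Finset.mem_image_of_mem _ hb)
    have hall : ∀ x ∈ t, ∃ j, x = Sum.inl j := by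
      intro x hx
      match x with
      | Sum.inl j => exact ⟨j, rfl⟩
      | Sum.inr (Sum.inl j) =>
        have h1 : a = j := (h12 a j).mp (ht hat hx (by simp))
        have h2 : b = j := (h12 b j).mp (ht hbt hx (by simp))
        exact absurd (h1.trans h2.symm) hab
      | Sum.inr (Sum.inr j) =>
        have h1 : a = j := (h13 a j).mp (ht hat hx (by simp))
        have h2 : b = j := (h13 b j).mp (ht hbt hx (by simp))
        exact absurd (h1.trans h2.symm) hab
    set t0 : Finset (Fin n) := Finset.univ.filter (fun j => Sum.inl j ∈ t) with ht0_def
    have ht0 : t = t0.image Sum.inl := by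
      ext x
      simp only [Finset.mem_image, ht0_def, Finset.mem_filter, Finset.mem_univ, true_and]
      constructor
      · intro hx
        obtain ⟨j, rfl⟩ := hall x hx
        exact ⟨j, hx, rfl⟩
      · rintro ⟨j, hj, rfl⟩
        exact hj
    have ht0c : G.IsClique ↑t0 := by
      intro x hx y hy hne
      refine (h11 x y).mp (ht ?_ ?_ (by simp [hne]))
      · simpa [ht0_def] using hx
      · simpa [ht0_def] using hy
    have hCsub : C k ⊆ t0 := by
      intro x hx
      simp only [ht0_def, Finset.mem_filter, Finset.mem_univ, true_and]
      exact hsub (Finset.mem_image_of_mem _ hx)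
    have := hCk.2 t0 ht0c hCsub
    rw [ht0, ← this]
  -- characterization
  have hchar : ∀ s : Finset (Fin n ⊕ Fin n ⊕ Fin n), IsMaxClique Ghat s ↔
      ((∃ k : Fin p, s = (C k).image Sum.inl) ∨ (∃ i : Fin n, s = tri i)) := by
    intro s
    constructor
    · intro hs
      by_cases hpure : ∀ x ∈ s, ∃ j, x = Sum.inl j
      · left
        set t0 : Finset (Fin n) := Finset.univ.filter (fun j => Sum.inl j ∈ s) with ht0_def
        have hs0 : s = t0.image Sum.inl := by
          ext x
          simp only [Finset.mem_image, ht0_def, Finset.mem_filter, Finset.mem_univ, true_and]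
          constructor
          · intro hx
            obtain ⟨j, rfl⟩ := hpure x hx
            exact ⟨j, hx, rfl⟩
          · rintro ⟨j, hj, rfl⟩
            exact hj
        have ht0c : G.IsClique ↑t0 := by
          intro x hx y hy hne
          refine (h11 x y).mp (hs.1 ?_ ?_ (by simp [hne]))
          · simpa [ht0_def] using hx
          · simpa [ht0_def] using hy
        have ht0max : IsMaxClique G t0 := by
          refine ⟨ht0c, fun t' ht' hsub' => ?_⟩
          have : s = t'.image Sum.inl := by
            refine hs.2 _ (himg _ ht') ?_
            rw [hs0]
            exact Finset.image_subset_image hsub'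
          rw [hs0] at this
          exact Finset.image_injective Sum.inl_injective this
        obtain ⟨k, hk⟩ := (hC t0).mp ht0max
        exact ⟨k, by rw [hs0, hk]⟩
      · right
        push_neg at hpure
        obtain ⟨x, hx, hxnl⟩ := hpure
        have key : ∀ i : Fin n,
            (Sum.inr (Sum.inl i) ∈ s ∨ Sum.inr (Sum.inr i) ∈ s) → s = tri i := by
          intro i hi
          have hsub : s ⊆ tri i := by
            intro y hy
            rcases hi with hi | hi
            · match y with
              | Sum.inl j =>
                have : j = i := (h12 j i).mp (hs.1 hy hi (by simp))
                simp [htri_def, this]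
              | Sum.inr (Sum.inl j) =>
                by_cases hji : j = i
                · simp [htri_def, hji]
                · exact absurd (hs.1 hy hi (by simp [hji])) (h22 j i)
              | Sum.inr (Sum.inr j) =>
                have : i = j := (h23 i j).mp (Ghat.adj_symm (hs.1 hy hi (by simp)))
                simp [htri_def, ← this]
            · match y with
              | Sum.inl j =>
                have : j = i := (h13 j i).mp (hs.1 hy hi (by simp))
                simp [htri_def, this]
              | Sum.inr (Sum.inl j) =>
                have : j = i := (h23 j i).mp (hs.1 hy hi (by simp))
                simp [htri_def, this]
              | Sum.inr (Sum.inr j) =>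
                by_cases hji : j = i
                · simp [htri_def, hji]
                · exact absurd (hs.1 hy hi (by simp [hji])) (h33 j i)
          exact hs.2 _ (htri_clique i) hsub
        match x with
        | Sum.inl j => exact absurd rfl (hxnl j)
        | Sum.inr (Sum.inl j) => exact ⟨j, key j (Or.inl hx)⟩
        | Sum.inr (Sum.inr j) => exact ⟨j, key j (Or.inr hx)⟩
    · rintro (⟨k, rfl⟩ | ⟨i, rfl⟩)
      · exact himg_max k
      · exact htri_max i
  have htri_card : ∀ i : Fin n, (tri i).card = 3 := by
    intro i
    rw [htri_def]
    rw [Finset.card_insert_of_notMem (by simp), Finset.card_insert_of_notMem (by simp),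
      Finset.card_singleton]
  refine ⟨hchar, ?_, ?_, ?_⟩
  · -- count
    have hset : {s : Finset (Fin n ⊕ Fin n ⊕ Fin n) | IsMaxClique Ghat s} =
        ↑((Finset.univ.image fun k => (C k).image Sum.inl) ∪ (Finset.univ.image tri)) := by
      ext s
      rw [Set.mem_setOf_eq, hchar]
      simp only [Finset.coe_union, Set.mem_union, Finset.coe_image, Set.mem_image,
        Finset.mem_coe, Finset.mem_univ, Finset.coe_univ, Set.mem_univ, true_and]
      constructor
      · rintro (⟨k, rfl⟩ | ⟨i, rfl⟩)
        · exact Or.inl ⟨k, rfl⟩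
        · exact Or.inr ⟨i, rfl⟩
      · rintro (⟨k, rfl⟩ | ⟨i, rfl⟩)
        · exact Or.inl ⟨k, rfl⟩
        · exact Or.inr ⟨i, rfl⟩
    rw [hset, Set.ncard_coe_finset]
    have hdisj : Disjoint (Finset.univ.image fun k => (C k).image Sum.inl)
        (Finset.univ.image tri) := by
      rw [Finset.disjoint_left]
      intro s hs1 hs2
      simp only [Finset.mem_image, Finset.mem_univ, true_and] at hs1 hs2
      obtain ⟨k, hk⟩ := hs1
      obtain ⟨i, hi⟩ := hs2
      have : Sum.inr (Sum.inl i) ∈ ((C k).image Sum.inl : Finset (Fin n ⊕ Fin n ⊕ Fin n)) := by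
        rw [hk, ← hi]
        simp [htri_def]
      simp at this
    rw [Finset.card_union_of_disjoint hdisj,
      Finset.card_image_of_injective _ (fun a b hab => hCinj
        (Finset.image_injective Sum.inl_injective hab)),
      Finset.card_image_of_injective _ ?_, Finset.card_univ, Finset.card_univ,
      Fintype.card_fin, Fintype.card_fin]
    intro a b hab
    have : Sum.inl a ∈ tri b := hab ▸ (by simp [htri_def])
    simpa [htri_def] using this
  · -- card bound
    intro s hs
    rcases (hchar s).mp hs with ⟨k, rfl⟩ | ⟨i, rfl⟩
    · rw [Finset.card_image_of_injective _ Sum.inl_injective]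
      exact le_trans (hhub k) (le_max_left _ _)
    · rw [htri_card]
      exact le_max_right _ _
  · -- existence
    rcases le_total 3 h with h3 | h3
    · obtain ⟨k, hk⟩ := hhex
      refine ⟨(C k).image Sum.inl, (hchar _).mpr (Or.inl ⟨k, rfl⟩), ?_⟩
      rw [Finset.card_image_of_injective _ Sum.inl_injective, hk, max_eq_left h3]
    · exact ⟨tri ⟨0, hn⟩, (hchar _).mpr (Or.inr ⟨_, rfl⟩),
        by rw [htri_card, max_eq_right h3]⟩
end

section
/- (Equivalence of the dual SDP and its chordally decomposed form.) Let G = (V,E) be a chordal undirected simple graph on V = {1,…,n} with maximal cliques C_1,…,C_p, let α = (α_1,…,α_n) be a partition with N = Σ_{i=1}^n α_i, and let A_0, A_1, …, A_m ∈ S^N be symmetric matrices whose α-blocks vanish outside the pattern, i.e., (A_l)_{ij} = 0 whenever i ≠ j and (i,j) ∉ E, for every l = 0,1,…,m; let b ∈ ℝ^m. Then a vector y ∈ ℝ^m is feasible for the dual SDP, i.e., there exists a positive semidefinite Z with Z + Σ_{i=1}^m y_i A_i = A_0, if and only if there exist positive semidefinite matrices V_k ∈ S^{|C_k|}, k = 1,…,p,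 with Σ_{k=1}^p E_{C_k}^T V_k E_{C_k} + Σ_{i=1}^m y_i A_i = A_0. Consequently the two problems of maximizing ⟨b, y⟩ over these respective feasible sets have the same optimal value. -/
open Matrix

/-- A graph is chordal if every cycle of length greater than three (i.e. of length `k + 4`)
has a chord: an edge between two nonconsecutive vertices of the cycle. -/
def IsChordal {V : Type*} (G : SimpleGraph V) : Prop :=
  ∀ (k : ℕ) (v : Fin (k + 4) → V), Function.Injective v →
    (∀ i, G.Adj (v i) (v (i + 1))) →
    ∃ i j, j ≠ i + 1 ∧ i ≠ j + 1 ∧ G.Adj (v i) (v j)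

/-- The index matrix `E_C ∈ ℝ^{|C| × N}` of a clique `C` for the block partition `α`:
its `(i, j)` block is the identity `I_{α_i}` if `i ∈ C` equals `j`, and `0` otherwise. -/
def indexMatrix {n : ℕ} (α : Fin n → ℕ) (C : Finset (Fin n)) :
    Matrix ((i : {x : Fin n // x ∈ C}) × Fin (α i.1)) ((i : Fin n) × Fin (α i)) ℝ :=
  fun p q => if (p.1 : Fin n) = q.1 ∧ (p.2 : ℕ) = (q.2 : ℕ) then 1 else 0


namespace ChordalAux


variable {V : Type*}

/-- A walk of length `L` along a relation `R`. -/
def IsWalk (R : V → V → Prop) (f : ℕ → V) (L : ℕ) (x y : V) : Prop :=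
  f 0 = x ∧ f L = y ∧ ∀ i < L, R (f i) (f (i + 1))

lemma isWalk_refl (R : V → V → Prop) (x : V) : IsWalk R (fun _ => x) 0 x x :=
  ⟨rfl, rfl, by omega⟩

lemma isWalk_single {R : V → V → Prop} {x y : V} (h : R x y) :
    IsWalk R (fun t => if t = 0 then x else y) 1 x y := by
  refine ⟨rfl, rfl, ?_⟩
  intro i hi
  have : i = 0 := by omega
  subst this
  simpa using h

lemma IsWalk.mono {R R' : V → V → Prop} (h : ∀ a b, R a b → R' a b) {f L x y}
    (hw : IsWalk R f L x y) : IsWalk R' f L x y :=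
  ⟨hw.1, hw.2.1, fun i hi => h _ _ (hw.2.2 i hi)⟩

lemma IsWalk.concat {R : V → V → Prop} {f g : ℕ → V} {L L' : ℕ} {x y z : V}
    (hf : IsWalk R f L x y) (hg : IsWalk R g L' y z) :
    IsWalk R (fun t => if t ≤ L then f t else g (t - L)) (L + L') x z := by
  obtain ⟨hf0, hfL, hfs⟩ := hf
  obtain ⟨hg0, hgL, hgs⟩ := hg
  have key : ∀ t, L ≤ t → (if t ≤ L then f t else g (t - L)) = g (t - L) := by
    intro t ht
    rcases eq_or_lt_of_le ht with h | h
    · subst h; simp [hfL, ← hg0]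
    · rw [if_neg (by omega)]
  refine ⟨by simp [hf0], ?_, ?_⟩
  · show (if L + L' ≤ L then f (L + L') else g (L + L' - L)) = z
    rw [key _ (by omega)]
    simpa using hgL
  · intro i hi
    dsimp only
    rcases lt_or_ge i L with h | h
    · rw [if_pos (by omega), if_pos (by omega)]
      exact hfs i h
    · rw [key _ h, key _ (by omega)]
      have : i + 1 - L = (i - L) + 1 := by omega
      rw [this]
      exact hgs _ (by omega)

lemma IsWalk.reverse {R : V → V → Prop} (hsym : ∀ a b, R a b → R b a) {f L x y}
    (hw : IsWalk R f L x y) : IsWalk R (fun t => f (L - t)) L y x := by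
  obtain ⟨h0, hL, hs⟩ := hw
  refine ⟨by simpa using hL, by simpa using h0, ?_⟩
  intro i hi
  dsimp only
  have h1 : L - i = (L - (i+1)) + 1 := by omega
  apply hsym
  rw [h1]
  exact hs _ (by omega)

lemma IsWalk.shortcut {R : V → V → Prop} {f L x y} (hw : IsWalk R f L x y)
    {a c : ℕ} (hac : a + 1 < c) (hcL : c ≤ L) (h : R (f a) (f c)) :
    IsWalk R (fun t => if t ≤ a then f t else f (t + (c - a - 1))) (L - (c - a - 1)) x y := by
  obtain ⟨h0, hL, hs⟩ := hw
  refine ⟨by simp [h0], ?_, ?_⟩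
  · show (if L - (c - a - 1) ≤ a then f (L - (c - a - 1))
        else f (L - (c - a - 1) + (c - a - 1))) = y
    rw [if_neg (by omega)]
    have : L - (c - a - 1) + (c - a - 1) = L := by omega
    rw [this, hL]
  · intro i hi
    dsimp only
    rcases lt_trichotomy i a with h1 | h1 | h1
    · rw [if_pos (by omega), if_pos (by omega)]
      exact hs i (by omega)
    · subst h1
      rw [if_pos (by omega), if_neg (by omega)]
      have : i + 1 + (c - i - 1) = c := by omega
      rw [this]
      exact h
    · rw [if_neg (by omega), if_neg (by omega)]
      have : i + 1 + (c - a - 1) = (i + (c - a - 1)) + 1 := by omega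
      rw [this]
      exact hs _ (by omega)

lemma IsWalk.cut {R : V → V → Prop} {f L x y} (hw : IsWalk R f L x y)
    {a c : ℕ} (hac : a < c) (hcL : c ≤ L) (h : f a = f c) :
    ∃ g, IsWalk R g (L - (c - a)) x y := by
  obtain ⟨h0, hL, hs⟩ := hw
  refine ⟨fun t => if t ≤ a then f t else f (t + (c - a)), by simp [h0], ?_, ?_⟩
  · show (if L - (c - a) ≤ a then f (L - (c - a)) else f (L - (c - a) + (c - a))) = y
    rcases eq_or_lt_of_le (show a ≤ L - (c - a) by omega) with h1 | h1
    · rw [if_pos (by omega)]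
      have h2 : c = L := by omega
      have h3 : L - (c - a) = a := by omega
      rw [h3, h, h2, hL]
    · rw [if_neg (by omega)]
      have : L - (c - a) + (c - a) = L := by omega
      rw [this, hL]
  · intro i hi
    dsimp only
    rcases lt_trichotomy i a with h1 | h1 | h1
    · rw [if_pos (by omega), if_pos (by omega)]
      exact hs i (by omega)
    · subst h1
      rw [if_pos (by omega), if_neg (by omega)]
      have h2 : i + 1 + (c - i) = c + 1 := by omega
      rw [h2, h]
      exact hs _ (by omega)
    · rw [if_neg (by omega), if_neg (by omega)]
      have : i + 1 + (c - a) = (i + (c - a)) + 1 := by omega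
      rw [this]
      exact hs _ (by omega)

/-- A minimal-length walk exists, and it is injective and chordless. -/
lemma exists_good_walk {R : V → V → Prop} (hsym : ∀ a b, R a b → R b a)
    (hirr : ∀ a, ¬ R a a) {x y : V} (h : ∃ L f, IsWalk R f L x y) :
    ∃ L f, IsWalk R f L x y ∧
      (∀ a c, a ≤ L → c ≤ L → f a = f c → a = c) ∧
      (∀ a c, a ≤ L → c ≤ L → R (f a) (f c) → c = a + 1 ∨ a = c + 1) := by
  classical
  have hne : ∃ L, ∃ f, IsWalk R f L x y := h
  obtain ⟨f, hf⟩ := Nat.find_spec hne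
  set L := Nat.find hne with hLdef
  have hmin : ∀ L' < L, ¬ ∃ f, IsWalk R f L' x y := fun L' h' => Nat.find_min hne h'
  have hinj : ∀ a c, a ≤ L → c ≤ L → f a = f c → a = c := by
    intro a c haL hcL hfeq
    by_contra hne'
    rcases lt_or_gt_of_ne hne' with h1 | h1
    · obtain ⟨g, hg⟩ := hf.cut h1 hcL hfeq
      exact hmin _ (by omega) ⟨g, hg⟩
    · obtain ⟨g, hg⟩ := hf.cut h1 haL hfeq.symm
      exact hmin _ (by omega) ⟨g, hg⟩
  refine ⟨L, f, hf, hinj, ?_⟩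
  intro a c haL hcL hR
  have hac : a ≠ c := by
    rintro rfl
    exact hirr _ hR
  by_contra hcon
  push_neg at hcon
  rcases lt_or_gt_of_ne hac with h1 | h1
  · have h2 : a + 1 < c := by omega
    exact hmin _ (by omega) ⟨_, hf.shortcut h2 hcL hR⟩
  · have h2 : c + 1 < a := by omega
    exact hmin _ (by omega) ⟨_, hf.shortcut h2 haL (hsym _ _ hR)⟩

/-- The restriction of adjacency to a vertex set `T`. -/
def Rg (G : SimpleGraph V) (T : Set V) : V → V → Prop :=
  fun u w => G.Adj u w ∧ u ∈ T ∧ w ∈ T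

lemma Rg.symm {G : SimpleGraph V} {T : Set V} : ∀ a b, Rg G T a b → Rg G T b a :=
  fun _ _ h => ⟨h.1.symm, h.2.2, h.2.1⟩

lemma Rg.irrefl {G : SimpleGraph V} {T : Set V} : ∀ a, ¬ Rg G T a a :=
  fun a h => G.irrefl h.1

/-- Reachability within a vertex set `T`. -/
def Reach (G : SimpleGraph V) (T : Set V) (x y : V) : Prop :=
  ∃ L f, IsWalk (Rg G T) f L x y

lemma Reach.refl (G : SimpleGraph V) (T : Set V) (x : V) : Reach G T x x :=
  ⟨0, fun _ => x, isWalk_refl _ x⟩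

lemma Reach.symm {G : SimpleGraph V} {T : Set V} {x y : V} (h : Reach G T x y) :
    Reach G T y x := by
  obtain ⟨L, f, hw⟩ := h
  exact ⟨L, _, hw.reverse Rg.symm⟩

lemma Reach.trans {G : SimpleGraph V} {T : Set V} {x y z : V} (h : Reach G T x y)
    (h' : Reach G T y z) : Reach G T x z := by
  obtain ⟨L, f, hw⟩ := h
  obtain ⟨L', g, hw'⟩ := h'
  exact ⟨L + L', _, hw.concat hw'⟩

lemma Reach.extend {G : SimpleGraph V} {T : Set V} {x y w : V} (h : Reach G T x y)
    (h' : Rg G T y w) : Reach G T x w :=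
  h.trans ⟨1, _, isWalk_single h'⟩

lemma walk_mem_of_isWalk {G : SimpleGraph V} {T : Set V} {f : ℕ → V} {L : ℕ} {x y : V}
    (hw : IsWalk (Rg G T) f L x y) (hL : 1 ≤ L) : ∀ i ≤ L, f i ∈ T := by
  intro i hi
  rcases lt_or_eq_of_le hi with h | h
  · exact (hw.2.2 i h).2.1
  · have h2 := (hw.2.2 (L - 1) (by omega)).2.2
    have h3 : L - 1 + 1 = L := by omega
    rw [h3] at h2
    rwa [h]

/-- If a walk in `T ∪ {z}` from `c ∈ T` hits `z ∉ T`, then `z` has a neighbor in `T`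
reachable from `c` within `T`. -/
lemma nbr_aux {G : SimpleGraph V} {T : Set V} {z c d : V} (hzT : z ∉ T) (hcT : c ∈ T)
    {L : ℕ} {f : ℕ → V} (hw : IsWalk (Rg G (T ∪ {z})) f L c d)
    (hex : ∃ i, i ≤ L ∧ f i = z) :
    ∃ u, u ∈ T ∧ G.Adj z u ∧ Reach G T c u := by
  classical
  have hzc : c ≠ z := fun h => hzT (h ▸ hcT)
  obtain ⟨hi0L, hfi0⟩ := Nat.find_spec hex
  set i0 := Nat.find hex with hi0
  have hmin : ∀ i < i0, ¬ (i ≤ L ∧ f i = z) := fun i h => Nat.find_min hex h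
  have hi0pos : 1 ≤ i0 := by
    rcases Nat.eq_zero_or_pos i0 with h | h
    · exfalso; apply hzc; rw [← hw.1, ← hfi0, h]
    · exact h
  -- the prefix walk stays in T
  have hpre : IsWalk (Rg G T) f (i0 - 1) c (f (i0 - 1)) := by
    refine ⟨hw.1, rfl, ?_⟩
    intro i hi
    have hstep := hw.2.2 i (by omega)
    have h1 : f i ∈ T := by
      rcases hstep.2.1 with h | h
      · exact h
      · exact absurd ⟨by omega, h⟩ (hmin i (by omega))
    have h2 : f (i + 1) ∈ T := by
      rcases hstep.2.2 with h | h
      · exact h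
      · exact absurd ⟨by omega, h⟩ (hmin (i + 1) (by omega))
    exact ⟨hstep.1, h1, h2⟩
  have huT : f (i0 - 1) ∈ T := by
    rcases Nat.eq_zero_or_pos (i0 - 1) with h | h
    · rw [h, hw.1]; exact hcT
    · exact walk_mem_of_isWalk hpre h _ le_rfl
  have hadj : G.Adj z (f (i0 - 1)) := by
    have hstep := hw.2.2 (i0 - 1) (by omega)
    have h3 : i0 - 1 + 1 = i0 := by omega
    rw [h3, hfi0] at hstep
    exact hstep.1.symm
  exact ⟨f (i0 - 1), huT, hadj, ⟨i0 - 1, f, hpre⟩⟩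


theorem exists_clique_separator {V : Type*} [Fintype V] [DecidableEq V] {G : SimpleGraph V}
    (hch : IsChordal G) {s : Finset V} {a b : V}
    (ha : a ∈ s) (hb : b ∈ s) (hab : a ≠ b) (hnadj : ¬ G.Adj a b) :
    ∃ S A B : Finset V, S ⊆ s ∧ A ⊆ s ∧ B ⊆ s ∧ a ∈ A ∧ b ∈ B ∧
      G.IsClique ↑S ∧ (∀ u ∈ s, u ∈ S ∨ u ∈ A ∨ u ∈ B) ∧
      (∀ u ∈ A, u ∉ S) ∧ (∀ u ∈ B, u ∉ S) ∧ (∀ u ∈ A, u ∉ B) ∧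
      (∀ u ∈ A, ∀ w ∈ B, ¬ G.Adj u w) := by
  classical
  set fam : Finset (Finset V) :=
    s.powerset.filter (fun S => a ∉ S ∧ b ∉ S ∧ ¬ Reach G ↑(s \ S) a b) with hfam
  have hfam_ne : ((s.erase a).erase b) ∈ fam := by
    rw [hfam, Finset.mem_filter, Finset.mem_powerset]
    refine ⟨(Finset.erase_subset _ _).trans (Finset.erase_subset _ _), ?_, ?_, ?_⟩
    · intro h
      exact (Finset.notMem_erase a s) (Finset.mem_of_mem_erase h)
    · exact Finset.notMem_erase b _
    · rintro ⟨L, f, hw⟩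
      have hsub : ∀ u, u ∈ (↑(s \ (s.erase a).erase b) : Set V) → u = a ∨ u = b := by
        intro u hu
        simp only [Finset.coe_sdiff, Set.mem_diff, Finset.mem_coe, Finset.mem_erase] at hu
        by_contra hcon
        push_neg at hcon
        exact hu.2 ⟨hcon.2, hcon.1, hu.1⟩
      rcases Nat.eq_zero_or_pos L with h | h
      · subst h
        exact hab (hw.1.symm.trans hw.2.1)
      · have hstep := hw.2.2 0 h
        rw [hw.1] at hstep
        rcases hsub _ hstep.2.2 with h1 | h1
        · rw [h1] at hstep; exact G.irrefl hstep.1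
        · rw [h1] at hstep; exact hnadj hstep.1
  obtain ⟨S, hSfam, hSmin⟩ := Finset.exists_min_image fam Finset.card ⟨_, hfam_ne⟩
  rw [hfam, Finset.mem_filter, Finset.mem_powerset] at hSfam
  obtain ⟨hSs, haS, hbS, hsep⟩ := hSfam
  set T : Set V := ↑(s \ S) with hT
  have hmemT : ∀ u, u ∈ T ↔ u ∈ s ∧ u ∉ S := by
    intro u; rw [hT]; simp [Finset.mem_sdiff]
  have haT : a ∈ T := (hmemT a).2 ⟨ha, haS⟩
  have hbT : b ∈ T := (hmemT b).2 ⟨hb, hbS⟩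
  set A : Finset V := (s \ S).filter (fun u => Reach G T a u) with hA
  set B : Finset V := (s \ S).filter (fun u => ¬ Reach G T a u) with hB
  have hmemA : ∀ u, u ∈ A ↔ (u ∈ T ∧ Reach G T a u) := by
    intro u; rw [hA, Finset.mem_filter]; rw [hmemT, Finset.mem_sdiff]
  have hmemB : ∀ u, u ∈ B ↔ (u ∈ T ∧ ¬ Reach G T a u) := by
    intro u; rw [hB, Finset.mem_filter]; rw [hmemT, Finset.mem_sdiff]
  have haA : a ∈ A := (hmemA a).2 ⟨haT, Reach.refl G T a⟩
  have hbB : b ∈ B := (hmemB b).2 ⟨hbT, hsep⟩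
  have hclose : ∀ u, u ∈ A → ∀ w, w ∈ T → G.Adj u w → w ∈ A := by
    intro u hu w hw hadj
    obtain ⟨huT, hru⟩ := (hmemA u).1 hu
    exact (hmemA w).2 ⟨hw, hru.extend ⟨hadj, huT, hw⟩⟩
  have hAstay : ∀ u, u ∈ A → ∀ v L f, IsWalk (Rg G T) f L u v → ∀ i, i ≤ L → f i ∈ A := by
    intro u hu v L f hwalk i
    induction i with
    | zero => intro _; rw [hwalk.1]; exact hu
    | succ k ih =>
      intro hk
      have hstep := hwalk.2.2 k (by omega)
      exact hclose _ (ih (by omega)) _ hstep.2.2 hstep.1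
  -- S is a clique
  have hSclique : G.IsClique (↑S : Set V) := by
    intro x hx y hy hxy
    by_contra hnxy
    rw [Finset.mem_coe] at hx hy
    set B' : Finset V := (s \ S).filter (fun u => Reach G T u b) with hB'
    have hmemB' : ∀ u, u ∈ B' ↔ (u ∈ T ∧ Reach G T u b) := by
      intro u; rw [hB', Finset.mem_filter]; rw [hmemT, Finset.mem_sdiff]
    have hcloseB : ∀ u, u ∈ B' → ∀ w, w ∈ T → G.Adj u w → w ∈ B' := by
      intro u hu w hw hadj
      obtain ⟨huT, hru⟩ := (hmemB' u).1 hu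
      exact (hmemB' w).2 ⟨hw, (Reach.extend (Reach.refl G T w) ⟨hadj.symm, hw, huT⟩).trans hru⟩
    have hBstay : ∀ u, u ∈ B' → ∀ v L f, IsWalk (Rg G T) f L u v → ∀ i, i ≤ L → f i ∈ B' := by
      intro u hu v L f hwalk i
      induction i with
      | zero => intro _; rw [hwalk.1]; exact hu
      | succ k ih =>
        intro hk
        have hstep := hwalk.2.2 k (by omega)
        exact hcloseB _ (ih (by omega)) _ hstep.2.2 hstep.1
    have hAB' : ∀ u, u ∈ A → u ∉ B' := by
      intro u hu hu'
      exact hsep (((hmemA u).1 hu).2.trans ((hmemB' u).1 hu').2)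
    have hnoedge : ∀ u, u ∈ A → ∀ w, w ∈ B' → ¬ G.Adj u w := by
      intro u hu w hw hadj
      have hwT : w ∈ T := ((hmemB' w).1 hw).1
      exact hAB' w (hclose u hu w hwT hadj) hw
    -- every vertex of S has neighbors in A and B'
    have hnbr : ∀ z, z ∈ S → (∃ u ∈ A, G.Adj z u) ∧ (∃ u ∈ B', G.Adj z u) := by
      intro z hz
      have hzs : z ∈ s := hSs hz
      have hza : z ≠ a := fun h => haS (h ▸ hz)
      have hzb : z ≠ b := fun h => hbS (h ▸ hz)
      have hzT : z ∉ T := fun h => ((hmemT z).1 h).2 hz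
      have hcard : (S.erase z).card < S.card := Finset.card_erase_lt_of_mem hz
      have hreach' : Reach G ↑(s \ S.erase z) a b := by
        by_contra hcon
        have : (S.erase z) ∈ fam := by
          rw [hfam, Finset.mem_filter, Finset.mem_powerset]
          exact ⟨(Finset.erase_subset _ _).trans hSs,
            fun h => haS (Finset.mem_of_mem_erase h),
            fun h => hbS (Finset.mem_of_mem_erase h), hcon⟩
        exact absurd (hSmin _ this) (by omega)
      have hTT : (↑(s \ S.erase z) : Set V) = T ∪ {z} := by
        ext u
        constructor
        · intro hu
          rcases Finset.mem_sdiff.1 (Finset.mem_coe.1 hu) with ⟨hus, hne⟩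
          by_cases h : u = z
          · exact Or.inr h
          · exact Or.inl ((hmemT u).2 ⟨hus, fun hus' => hne (Finset.mem_erase.2 ⟨h, hus'⟩)⟩)
        · intro hu
          apply Finset.mem_coe.2
          rcases hu with hu | hu
          · obtain ⟨hus, hnS⟩ := (hmemT u).1 hu
            exact Finset.mem_sdiff.2 ⟨hus, fun h => hnS (Finset.mem_of_mem_erase h)⟩
          · rw [Set.mem_singleton_iff] at hu
            subst hu
            exact Finset.mem_sdiff.2 ⟨hzs, fun h => (Finset.mem_erase.1 h).1 rfl⟩
      rw [hTT] at hreach'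
      obtain ⟨L, f, hw⟩ := hreach'
      have hex : ∃ i, i ≤ L ∧ f i = z := by
        by_contra hcon
        push_neg at hcon
        apply hsep
        refine ⟨L, f, hw.1, hw.2.1, ?_⟩
        intro i hi
        have hstep := hw.2.2 i hi
        have h1 : f i ∈ T := by
          rcases hstep.2.1 with h | h
          · exact h
          · exact absurd (Set.mem_singleton_iff.1 h) (hcon i (by omega))
        have h2 : f (i + 1) ∈ T := by
          rcases hstep.2.2 with h | h
          · exact h
          · exact absurd (Set.mem_singleton_iff.1 h) (hcon (i + 1) (by omega))
        exact ⟨hstep.1, h1, h2⟩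
      obtain ⟨u, huT, huadj, hureach⟩ := nbr_aux hzT haT hw hex
      have hexrev : ∃ i, i ≤ L ∧ (fun t => f (L - t)) i = z := by
        obtain ⟨i, hiL, hfi⟩ := hex
        exact ⟨L - i, by omega, by simp only []; rw [show L - (L - i) = i by omega]; exact hfi⟩
      obtain ⟨u', hu'T, hu'adj, hu'reach⟩ := nbr_aux hzT hbT (hw.reverse Rg.symm) hexrev
      exact ⟨⟨u, (hmemA u).2 ⟨huT, hureach⟩, huadj⟩,
             ⟨u', (hmemB' u').2 ⟨hu'T, hu'reach.symm⟩, hu'adj⟩⟩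
    obtain ⟨⟨xA, hxA, hxAadj⟩, ⟨xB, hxB, hxBadj⟩⟩ := hnbr x hx
    obtain ⟨⟨yA, hyA, hyAadj⟩, ⟨yB, hyB, hyBadj⟩⟩ := hnbr y hy
    -- membership facts
    have hxnA : x ∉ A := fun h => (((hmemT x).1 ((hmemA x).1 h).1).2) hx
    have hynA : y ∉ A := fun h => (((hmemT y).1 ((hmemA y).1 h).1).2) hy
    have hxnB : x ∉ B' := fun h => (((hmemT x).1 ((hmemB' x).1 h).1).2) hx
    have hynB : y ∉ B' := fun h => (((hmemT y).1 ((hmemB' y).1 h).1).2) hy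
    -- path P1 through A
    set TA : Set V := ↑A ∪ {x, y} with hTA
    have hstepsA : ∃ L f, IsWalk (Rg G TA) f L x y := by
      have hr1 : Reach G T xA yA :=
        (((hmemA xA).1 hxA).2.symm).trans ((hmemA yA).1 hyA).2
      obtain ⟨L0, f0, hw0⟩ := hr1
      have hmemw : ∀ i, i ≤ L0 → f0 i ∈ A := hAstay xA hxA yA L0 f0 hw0
      have hw0A : IsWalk (Rg G TA) f0 L0 xA yA := by
        refine ⟨hw0.1, hw0.2.1, ?_⟩
        intro i hi
        refine ⟨(hw0.2.2 i hi).1, ?_, ?_⟩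
        · exact Or.inl (Finset.mem_coe.2 (hmemw i (by omega)))
        · exact Or.inl (Finset.mem_coe.2 (hmemw (i + 1) (by omega)))
      have hxTA : x ∈ TA := Or.inr (by simp)
      have hyTA : y ∈ TA := Or.inr (by simp)
      have e1 : IsWalk (Rg G TA) _ 1 x xA :=
        isWalk_single ⟨hxAadj, hxTA, Or.inl (Finset.mem_coe.2 hxA)⟩
      have e2 : IsWalk (Rg G TA) _ 1 yA y :=
        isWalk_single ⟨hyAadj.symm, Or.inl (Finset.mem_coe.2 hyA), hyTA⟩
      exact ⟨_, _, (e1.concat hw0A).concat e2⟩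
    obtain ⟨L1, f1, hgw1, hinj1, hchord1⟩ := exists_good_walk Rg.symm Rg.irrefl hstepsA
    -- path P2 through B'
    set TB : Set V := ↑B' ∪ {x, y} with hTB
    have hstepsB : ∃ L f, IsWalk (Rg G TB) f L x y := by
      have hr1 : Reach G T xB yB :=
        (((hmemB' xB).1 hxB).2).trans (((hmemB' yB).1 hyB).2.symm)
      obtain ⟨L0, f0, hw0⟩ := hr1
      have hmemw : ∀ i, i ≤ L0 → f0 i ∈ B' := hBstay xB hxB yB L0 f0 hw0
      have hw0B : IsWalk (Rg G TB) f0 L0 xB yB := by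
        refine ⟨hw0.1, hw0.2.1, ?_⟩
        intro i hi
        refine ⟨(hw0.2.2 i hi).1, ?_, ?_⟩
        · exact Or.inl (Finset.mem_coe.2 (hmemw i (by omega)))
        · exact Or.inl (Finset.mem_coe.2 (hmemw (i + 1) (by omega)))
      have hxTB : x ∈ TB := Or.inr (by simp)
      have hyTB : y ∈ TB := Or.inr (by simp)
      have e1 : IsWalk (Rg G TB) _ 1 x xB :=
        isWalk_single ⟨hxBadj, hxTB, Or.inl (Finset.mem_coe.2 hxB)⟩
      have e2 : IsWalk (Rg G TB) _ 1 yB y :=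
        isWalk_single ⟨hyBadj.symm, Or.inl (Finset.mem_coe.2 hyB), hyTB⟩
      exact ⟨_, _, (e1.concat hw0B).concat e2⟩
    obtain ⟨L2, f2, hgw2, hinj2, hchord2⟩ := exists_good_walk Rg.symm Rg.irrefl hstepsB
    have hL1two : 2 ≤ L1 := by
      by_contra hcon
      push_neg at hcon
      interval_cases L1
      · exact hxy (hgw1.1.symm.trans hgw1.2.1)
      · have h1 := (hgw1.2.2 0 (by omega)).1
        rw [hgw1.1, show (0:ℕ) + 1 = 1 from rfl, hgw1.2.1] at h1
        exact hnxy h1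
    have hL2two : 2 ≤ L2 := by
      by_contra hcon
      push_neg at hcon
      interval_cases L2
      · exact hxy (hgw2.1.symm.trans hgw2.2.1)
      · have h1 := (hgw2.2.2 0 (by omega)).1
        rw [hgw2.1, show (0:ℕ) + 1 = 1 from rfl, hgw2.2.1] at h1
        exact hnxy h1
    have hmem1 : ∀ t, 1 ≤ t → t ≤ L1 - 1 → f1 t ∈ A := by
      intro t h1 h2
      have hTA' : f1 t ∈ TA := walk_mem_of_isWalk hgw1 (by omega) t (by omega)
      rcases hTA' with h | h
      · exact Finset.mem_coe.1 h
      · exfalso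
        rcases h with h | h
        · exact absurd (hinj1 t 0 (by omega) (by omega) (by rw [hgw1.1, h])) (by omega)
        · rw [Set.mem_singleton_iff] at h
          exact absurd (hinj1 t L1 (by omega) le_rfl (by rw [hgw1.2.1, h])) (by omega)
    have hmem2 : ∀ t, 1 ≤ t → t ≤ L2 - 1 → f2 t ∈ B' := by
      intro t h1 h2
      have hTB' : f2 t ∈ TB := walk_mem_of_isWalk hgw2 (by omega) t (by omega)
      rcases hTB' with h | h
      · exact Finset.mem_coe.1 h
      · exfalso
        rcases h with h | h
        · exact absurd (hinj2 t 0 (by omega) (by omega) (by rw [hgw2.1, h])) (by omega)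
        · rw [Set.mem_singleton_iff] at h
          exact absurd (hinj2 t L2 (by omega) le_rfl (by rw [hgw2.2.1, h])) (by omega)
    -- the cycle
    set M := L1 + L2 with hM
    set w : ℕ → V := fun t => if t ≤ L1 then f1 t else f2 (M - t) with hwdef
    have hw0 : w 0 = x := by simp only [hwdef]; rw [if_pos (by omega), hgw1.1]
    have hclassify : ∀ t, t < M → (t ≤ L1 ∧ w t = f1 t) ∨
        (L1 + 1 ≤ t ∧ w t = f2 (M - t) ∧ 1 ≤ M - t ∧ M - t ≤ L2 - 1) := by
      intro t ht
      rcases le_or_gt t L1 with h | h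
      · exact Or.inl ⟨h, by simp only [hwdef]; rw [if_pos h]⟩
      · refine Or.inr ⟨by omega, by simp only [hwdef]; rw [if_neg (by omega)], by omega, by omega⟩
    -- f2-index representation for positions in {0} ∪ [L1, M-1]
    have hf2idx : ∀ t, t < M → (t = 0 ∨ L1 ≤ t) →
        ∃ c, c ≤ L2 ∧ w t = f2 c ∧ ((t = 0 ∧ c = 0) ∨ (L1 ≤ t ∧ c = M - t)) := by
      intro t ht hc
      rcases hc with rfl | h
      · refine ⟨0, by omega, ?_, Or.inl ⟨rfl, rfl⟩⟩
        rw [hw0, ← hgw2.1]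
      · rcases eq_or_lt_of_le h with h1 | h1
        · refine ⟨M - t, by omega, ?_, Or.inr ⟨h, rfl⟩⟩
          simp only [hwdef]
          rw [if_pos (by omega), ← h1, show M - L1 = L2 by omega, hgw1.2.1, hgw2.2.1]
        · exact ⟨M - t, by omega, by simp only [hwdef]; rw [if_neg (by omega)], Or.inr ⟨h, rfl⟩⟩
    have hwinj : ∀ t1 t2, t1 < M → t2 < M → w t1 = w t2 → t1 = t2 := by
      intro t1 t2 h1 h2 heq
      rcases hclassify t1 h1 with ⟨hc1, he1⟩ | ⟨hc1, he1, hd1, hd1'⟩ <;>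
        rcases hclassify t2 h2 with ⟨hc2, he2⟩ | ⟨hc2, he2, hd2, hd2'⟩
      · exact hinj1 t1 t2 hc1 hc2 (by rw [← he1, ← he2, heq])
      · exfalso
        have hb : f2 (M - t2) ∈ B' := hmem2 _ hd2 hd2'
        rw [← he2, ← heq, he1] at hb
        -- f1 t1 ∈ B' with t1 ≤ L1 : contradiction
        rcases Nat.eq_zero_or_pos t1 with h0 | h0
        · rw [h0, hgw1.1] at hb; exact hxnB hb
        · rcases eq_or_lt_of_le hc1 with hL | hL
          · rw [hL, hgw1.2.1] at hb; exact hynB hb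
          · exact hAB' _ (hmem1 t1 h0 (by omega)) hb
      · exfalso
        have hb : f2 (M - t1) ∈ B' := hmem2 _ hd1 hd1'
        rw [← he1, heq, he2] at hb
        rcases Nat.eq_zero_or_pos t2 with h0 | h0
        · rw [h0, hgw1.1] at hb; exact hxnB hb
        · rcases eq_or_lt_of_le hc2 with hL | hL
          · rw [hL, hgw1.2.1] at hb; exact hynB hb
          · exact hAB' _ (hmem1 t2 h0 (by omega)) hb
      · have := hinj2 (M - t1) (M - t2) (by omega) (by omega)
          (by rw [← he1, ← he2, heq])
        omega
    have hK : ∃ K, M = K + 4 := ⟨M - 4, by omega⟩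
    obtain ⟨K, hKM⟩ := hK
    set v : Fin (K + 4) → V := fun i => w i.val with hv
    have hvallt : ∀ i : Fin (K + 4), i.val < M := fun i => by have := i.isLt; omega
    have hval1 : ∀ i : Fin (K + 4), ((i + 1 : Fin (K + 4))).val = (i.val + 1) % M := by
      intro i
      rw [Fin.add_def]
      simp only [Fin.val_one]
      rw [hKM]
    have hvinj : Function.Injective v := by
      intro i j hij
      exact Fin.ext (hwinj i.val j.val (hvallt i) (hvallt j) hij)
    have hvadj : ∀ i, G.Adj (v i) (v (i + 1)) := by
      intro i
      have ht : i.val < M := hvallt i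
      show G.Adj (w i.val) (w ((i + 1 : Fin (K + 4))).val)
      rw [hval1 i]
      rcases eq_or_lt_of_le (show i.val + 1 ≤ M by omega) with hteq | htlt
      · rw [hteq, Nat.mod_self, hw0]
        have h1 : w i.val = f2 1 := by
          simp only [hwdef]
          rw [if_neg (by omega), show M - i.val = 1 by omega]
        rw [h1, ← hgw2.1]
        exact ((hgw2.2.2 0 (by omega)).1).symm
      · rw [Nat.mod_eq_of_lt htlt]
        rcases le_or_gt (i.val + 1) L1 with h | h
        · have e1 : w i.val = f1 i.val := by simp only [hwdef]; rw [if_pos (by omega)]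
          have e2 : w (i.val + 1) = f1 (i.val + 1) := by simp only [hwdef]; rw [if_pos h]
          rw [e1, e2]
          exact (hgw1.2.2 i.val (by omega)).1
        · rcases eq_or_lt_of_le (show L1 ≤ i.val by omega) with hEq | hGt
          · have e1 : w i.val = f1 L1 := by
              simp only [hwdef]; rw [if_pos (by omega), ← hEq]
            have e2 : w (i.val + 1) = f2 (L2 - 1) := by
              simp only [hwdef]
              rw [if_neg (by omega), show M - (i.val + 1) = L2 - 1 by omega]
            rw [e1, e2, hgw1.2.1, ← hgw2.2.1]
            have h3 := (hgw2.2.2 (L2 - 1) (by omega)).1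
            rw [show L2 - 1 + 1 = L2 by omega] at h3
            exact h3.symm
          · have e1 : w i.val = f2 (M - i.val) := by
              simp only [hwdef]; rw [if_neg (by omega)]
            have e2 : w (i.val + 1) = f2 (M - i.val - 1) := by
              simp only [hwdef]
              rw [if_neg (by omega), show M - (i.val + 1) = M - i.val - 1 by omega]
            rw [e1, e2]
            have h3 := (hgw2.2.2 (M - i.val - 1) (by omega)).1
            rw [show M - i.val - 1 + 1 = M - i.val by omega] at h3
            exact h3.symm
    obtain ⟨i, j, hji, hij, hadj⟩ := hch K v hvinj hvadj
    set a' := i.val with ha'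
    set b' := j.val with hb'
    have ha'M : a' < M := hvallt i
    have hb'M : b' < M := hvallt j
    have h1 : b' ≠ (a' + 1) % M := by
      intro h
      apply hji
      apply Fin.ext
      rw [hval1 i, ← h]
    have h2 : a' ≠ (b' + 1) % M := by
      intro h
      apply hij
      apply Fin.ext
      rw [hval1 j, ← h]
    have hne : a' ≠ b' := by
      intro h
      have : i = j := Fin.ext h
      rw [this] at hadj
      exact G.irrefl hadj
    have hadj' : G.Adj (w a') (w b') := hadj
    -- case analyses
    have case1 : ∀ t1 t2, t1 ≤ L1 → t2 ≤ L1 → t1 ≠ t2 → G.Adj (w t1) (w t2) →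
        t2 = t1 + 1 ∨ t1 = t2 + 1 := by
      intro t1 t2 hA1 hA2 hne12 hadj12
      have e1 : w t1 = f1 t1 := by simp only [hwdef]; rw [if_pos hA1]
      have e2 : w t2 = f1 t2 := by simp only [hwdef]; rw [if_pos hA2]
      rw [e1, e2] at hadj12
      have hm1 : f1 t1 ∈ TA := walk_mem_of_isWalk hgw1 (by omega) t1 hA1
      have hm2 : f1 t2 ∈ TA := walk_mem_of_isWalk hgw1 (by omega) t2 hA2
      exact hchord1 t1 t2 hA1 hA2 ⟨hadj12, hm1, hm2⟩
    have case2 : ∀ t1 t2, t1 < M → t2 < M → (t1 = 0 ∨ L1 ≤ t1) → (t2 = 0 ∨ L1 ≤ t2) →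
        t1 ≠ t2 → G.Adj (w t1) (w t2) →
        t2 = (t1 + 1) % M ∨ t1 = (t2 + 1) % M := by
      intro t1 t2 hm1 hm2 hp1 hp2 hne12 hadj12
      obtain ⟨c, hcL, hwc, hcinfo⟩ := hf2idx t1 hm1 hp1
      obtain ⟨d, hdL, hwd, hdinfo⟩ := hf2idx t2 hm2 hp2
      rw [hwc, hwd] at hadj12
      have hmc : f2 c ∈ TB := walk_mem_of_isWalk hgw2 (by omega) c hcL
      have hmd : f2 d ∈ TB := walk_mem_of_isWalk hgw2 (by omega) d hdL
      rcases hchord2 c d hcL hdL ⟨hadj12, hmc, hmd⟩ with hcd | hcd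
      · -- d = c + 1
        rcases hcinfo with ⟨ht1, hc0⟩ | ⟨ht1, hcM⟩ <;> rcases hdinfo with ⟨ht2, hd0⟩ | ⟨ht2, hdM⟩
        · omega
        · -- t1 = 0, c = 0, d = 1 = M - t2 → t2 = M - 1
          right
          have : t2 = M - 1 := by omega
          rw [this, ht1, show M - 1 + 1 = M by omega, Nat.mod_self]
        · omega
        · -- M - t2 = M - t1 + 1 → t1 = t2 + 1
          right
          have h5 : t1 = t2 + 1 := by omega
          rw [h5, Nat.mod_eq_of_lt (by omega)]
      · -- c = d + 1
        rcases hcinfo with ⟨ht1, hc0⟩ | ⟨ht1, hcM⟩ <;> rcases hdinfo with ⟨ht2, hd0⟩ | ⟨ht2, hdM⟩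
        · omega
        · omega
        · -- t2 = 0, d = 0, c = 1 = M - t1 → t1 = M - 1
          left
          have : t1 = M - 1 := by omega
          rw [this, ht2, show M - 1 + 1 = M by omega, Nat.mod_self]
        · left
          have h5 : t2 = t1 + 1 := by omega
          rw [h5, Nat.mod_eq_of_lt (by omega)]
    have mixed : ∀ t1 t2, 1 ≤ t1 → t1 ≤ L1 - 1 → L1 + 1 ≤ t2 → t2 ≤ M - 1 →
        ¬ G.Adj (w t1) (w t2) := by
      intro t1 t2 hx1 hx2 hy1 hy2 hadj12
      have e1 : w t1 = f1 t1 := by simp only [hwdef]; rw [if_pos (by omega)]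
      have e2 : w t2 = f2 (M - t2) := by simp only [hwdef]; rw [if_neg (by omega)]
      rw [e1, e2] at hadj12
      exact hnoedge _ (hmem1 t1 hx1 hx2) _ (hmem2 (M - t2) (by omega) (by omega)) hadj12
    -- final case analysis
    rcases le_or_gt a' L1 with hA1 | hA1 <;> rcases le_or_gt b' L1 with hB1 | hB1
    · rcases case1 a' b' hA1 hB1 hne hadj' with h | h
      · exact h1 (by rw [h, Nat.mod_eq_of_lt (by omega)])
      · exact h2 (by rw [h, Nat.mod_eq_of_lt (by omega)])
    · -- a' ≤ L1 < b'
      rcases show a' = 0 ∨ a' = L1 ∨ (1 ≤ a' ∧ a' ≤ L1 - 1) by omega with h | h | h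
      · rcases case2 a' b' ha'M hb'M (Or.inl h) (Or.inr (by omega)) hne hadj' with hc | hc
        · exact h1 hc
        · exact h2 hc
      · rcases case2 a' b' ha'M hb'M (Or.inr (by omega)) (Or.inr (by omega)) hne hadj' with hc | hc
        · exact h1 hc
        · exact h2 hc
      · exact mixed a' b' h.1 h.2 (by omega) (by omega) hadj'
    · -- b' ≤ L1 < a'
      rcases show b' = 0 ∨ b' = L1 ∨ (1 ≤ b' ∧ b' ≤ L1 - 1) by omega with h | h | h
      · rcases case2 a' b' ha'M hb'M (Or.inr (by omega)) (Or.inl h) hne hadj' with hc | hc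
        · exact h1 hc
        · exact h2 hc
      · rcases case2 a' b' ha'M hb'M (Or.inr (by omega)) (Or.inr (by omega)) hne hadj' with hc | hc
        · exact h1 hc
        · exact h2 hc
      · exact mixed b' a' h.1 h.2 (by omega) (by omega) hadj'.symm
    · rcases case2 a' b' ha'M hb'M (Or.inr (by omega)) (Or.inr (by omega)) hne hadj' with hc | hc
      · exact h1 hc
      · exact h2 hc
  -- assemble the result
  refine ⟨S, A, B, hSs, ?_, ?_, haA, hbB, hSclique, ?_, ?_, ?_, ?_, ?_⟩
  · intro u hu
    exact (Finset.mem_sdiff.1 (Finset.mem_filter.1 hu).1).1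
  · intro u hu
    exact (Finset.mem_sdiff.1 (Finset.mem_filter.1 hu).1).1
  · intro u hu
    by_cases h : u ∈ S
    · exact Or.inl h
    · by_cases h2 : Reach G T a u
      · exact Or.inr (Or.inl ((hmemA u).2 ⟨(hmemT u).2 ⟨hu, h⟩, h2⟩))
      · exact Or.inr (Or.inr ((hmemB u).2 ⟨(hmemT u).2 ⟨hu, h⟩, h2⟩))
  · intro u hu
    exact ((hmemT u).1 ((hmemA u).1 hu).1).2
  · intro u hu
    exact ((hmemT u).1 ((hmemB u).1 hu).1).2
  · intro u hu hu2
    exact ((hmemB u).1 hu2).2 ((hmemA u).1 hu).2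
  · intro u hu w' hw' hadj
    have hw'A : w' ∈ A := hclose u hu w' ((hmemB w').1 hw').1 hadj
    exact ((hmemB w').1 hw').2 ((hmemA w').1 hw'A).2




open Matrix

local notation "⟪" x ", " y "⟫" => @inner ℝ _ _ x y

lemma gram_posSemidef {I : Type*} [Fintype I] {E : Type*} [NormedAddCommGroup E]
    [InnerProductSpace ℝ E] (v : I → E) :
    (Matrix.of fun x y => (⟪v x, v y⟫ : ℝ)).PosSemidef := by
  rw [posSemidef_iff_dotProduct_mulVec]
  constructor
  · ext x y
    simp only [conjTranspose_apply, of_apply, star_trivial]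
    exact real_inner_comm _ _
  · intro c
    have hkey : (star c) ⬝ᵥ ((Matrix.of fun x y => (⟪v x, v y⟫ : ℝ)) *ᵥ c)
        = ⟪∑ x, c x • v x, ∑ y, c y • v y⟫ := by
      rw [sum_inner]
      rw [dotProduct]
      apply Finset.sum_congr rfl
      intro x _
      rw [inner_sum, mulVec, dotProduct]
      simp only [star_trivial, Pi.star_apply, of_apply]
      rw [Finset.mul_sum]
      apply Finset.sum_congr rfl
      intro y _
      rw [real_inner_smul_left, real_inner_smul_right]
      ring
    rw [hkey]
    exact real_inner_self_nonneg

lemma gram_split {I : Type*} [Fintype I] [DecidableEq I] (Z : Matrix I I ℝ)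
    (hZ : Z.PosSemidef) (PA PB : I → Prop) (hAB : ∀ x y, PA x → PB y → Z x y = 0) :
    ∃ Z1 Z2 : Matrix I I ℝ, Z1.PosSemidef ∧ Z2.PosSemidef ∧ Z = Z1 + Z2 ∧
      (∀ x y, PB x ∨ PB y → Z1 x y = 0) ∧
      (∀ x y, PA x ∨ PA y → Z2 x y = 0) ∧
      (∀ x y, Z x x = 0 → Z1 x y = 0 ∧ Z1 y x = 0) := by
  classical
  obtain ⟨Bm, hBm⟩ : ∃ Bm : Matrix I I ℝ, Z = Bmᴴ * Bm := by
    open scoped MatrixOrder in exact CStarAlgebra.nonneg_iff_eq_star_mul_self.mp hZ.nonneg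
  set b : I → EuclideanSpace ℝ I := fun x => WithLp.toLp 2 (fun r => Bm r x) with hb
  have hZb : ∀ x y, Z x y = ⟪b x, b y⟫ := by
    intro x y
    rw [hBm]
    rw [Matrix.mul_apply, PiLp.inner_apply]
    apply Finset.sum_congr rfl
    intro r _
    simp [hb, conjTranspose_apply, RCLike.inner_apply, mul_comm]
  set U : Submodule ℝ (EuclideanSpace ℝ I) := Submodule.span ℝ (b '' {x | PA x}) with hU
  set u1 : I → EuclideanSpace ℝ I := fun x => (U.orthogonalProjectionOnto (b x) : EuclideanSpace ℝ I)
    with hu1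
  set u2 : I → EuclideanSpace ℝ I := fun x => b x - u1 x with hu2
  have hu1U : ∀ x, u1 x ∈ U := fun x => (U.orthogonalProjectionOnto (b x)).2
  have hu2U : ∀ x, u2 x ∈ Uᗮ := fun x => Submodule.sub_starProjection_mem_orthogonal (b x)
  have hcross : ∀ x y, ⟪u1 x, u2 y⟫ = 0 :=
    fun x y => Submodule.inner_right_of_mem_orthogonal (hu1U x) (hu2U y)
  have hcross' : ∀ x y, ⟪u2 x, u1 y⟫ = 0 :=
    fun x y => Submodule.inner_left_of_mem_orthogonal (hu1U y) (hu2U x)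
  refine ⟨Matrix.of fun x y => ⟪u1 x, u1 y⟫, Matrix.of fun x y => ⟪u2 x, u2 y⟫,
    gram_posSemidef u1, gram_posSemidef u2, ?_, ?_, ?_, ?_⟩
  · ext x y
    have hdecomp : ∀ t, b t = u1 t + u2 t := by intro t; rw [hu2]; module
    rw [Matrix.add_apply, Matrix.of_apply, Matrix.of_apply, hZb x y, hdecomp x, hdecomp y]
    rw [inner_add_left, inner_add_right, inner_add_right, hcross, hcross']
    ring
  · intro x y hxy
    have hmem : ∀ t, PB t → b t ∈ Uᗮ := by
      intro t ht
      rw [Submodule.mem_orthogonal]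
      intro u hu
      rw [hU] at hu
      induction hu using Submodule.span_induction with
      | mem v hv =>
        obtain ⟨z, hz, rfl⟩ := hv
        rw [← hZb]
        exact hAB z t hz ht
      | zero => simp
      | add v w _ _ hv hw => rw [inner_add_left, hv, hw]; ring
      | smul r v _ hv => rw [real_inner_smul_left, hv]; ring
    rcases hxy with h | h
    · have : u1 x = 0 := by
        rw [hu1]
        simp only []
        rw [show U.orthogonalProjectionOnto (b x) = 0 from Submodule.orthogonalProjectionOnto_eq_zero_iff.2
          (hmem x h)]
        simp
      rw [Matrix.of_apply, this, inner_zero_left]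
    · have : u1 y = 0 := by
        rw [hu1]
        simp only []
        rw [show U.orthogonalProjectionOnto (b y) = 0 from Submodule.orthogonalProjectionOnto_eq_zero_iff.2
          (hmem y h)]
        simp
      rw [Matrix.of_apply, this, inner_zero_right]
  · intro x y hxy
    have hmem : ∀ t, PA t → u2 t = 0 := by
      intro t ht
      have hbU : b t ∈ U := Submodule.subset_span ⟨t, ht, rfl⟩
      rw [hu2]
      simp only []
      rw [hu1]
      simp only []
      rw [Submodule.coe_orthogonalProjectionOnto_apply, Submodule.starProjection_eq_self_iff.2 hbU, sub_self]
    rcases hxy with h | h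
    · rw [Matrix.of_apply, hmem x h, inner_zero_left]
    · rw [Matrix.of_apply, hmem y h, inner_zero_right]
  · intro x y hxx
    have hbx : b x = 0 := by
      rw [hZb x x] at hxx
      exact inner_self_eq_zero.1 hxx
    have h1 : u1 x = 0 := by
      rw [hu1]
      simp only []
      rw [hbx]
      simp
    exact ⟨by rw [Matrix.of_apply, h1, inner_zero_left],
           by rw [Matrix.of_apply, h1, inner_zero_right]⟩






lemma core_decomp {V : Type*} [Fintype V] [DecidableEq V] {G : SimpleGraph V}
    (hch : IsChordal G) (α : V → ℕ) :
    ∀ (m : ℕ) (s : Finset V) (Z : Matrix ((i : V) × Fin (α i)) ((i : V) × Fin (α i)) ℝ),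
      s.card ≤ m → Z.PosSemidef →
      (∀ x y, Z x y ≠ 0 → x.1 ∈ s ∧ y.1 ∈ s ∧ (x.1 = y.1 ∨ G.Adj x.1 y.1)) →
      ∃ (N : ℕ) (M : Fin N → Matrix ((i : V) × Fin (α i)) ((i : V) × Fin (α i)) ℝ)
        (c : Fin N → Finset V),
        (∀ t, (M t).PosSemidef) ∧ (∀ t, G.IsClique (↑(c t) : Set V)) ∧
        (∀ t x y, M t x y ≠ 0 → x.1 ∈ c t ∧ y.1 ∈ c t) ∧ Z = ∑ t, M t := by
  intro m
  induction m with
  | zero =>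
    intro s Z hcard hZ hsupp
    exact ⟨1, fun _ => Z, fun _ => s,
      fun _ => hZ,
      fun _ => by
        have hs : s = ∅ := Finset.card_eq_zero.1 (by omega)
        subst hs; simp,
      fun t x y h => ⟨(hsupp x y h).1, (hsupp x y h).2.1⟩, by rw [Fin.sum_univ_one]⟩
  | succ m ih =>
    intro s Z hcard hZ hsupp
    by_cases hclq : G.IsClique (↑s : Set V)
    · exact ⟨1, fun _ => Z, fun _ => s, fun _ => hZ, fun _ => hclq,
        fun t x y h => ⟨(hsupp x y h).1, (hsupp x y h).2.1⟩, by rw [Fin.sum_univ_one]⟩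
    · rw [SimpleGraph.isClique_iff, Set.Pairwise] at hclq
      push_neg at hclq
      obtain ⟨a, ha, b, hb, hab, hnadj⟩ := hclq
      rw [Finset.mem_coe] at ha hb
      obtain ⟨S, A, B, hSs, hAs, hBs, haA, hbB, hSclq, hcover, hAnS, hBnS, hAnB, hnoadj⟩ :=
        exists_clique_separator hch ha hb hab hnadj
      have hZAB : ∀ x y : (i : V) × Fin (α i), x.1 ∈ A → y.1 ∈ B → Z x y = 0 := by
        intro x y hx hy
        by_contra h
        obtain ⟨_, _, heq⟩ := hsupp x y h
        rcases heq with heq | heq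
        · exact hAnB _ hx (heq ▸ hy)
        · exact hnoadj _ hx _ hy heq
      obtain ⟨Z1, Z2, hZ1, hZ2, hsum, h1B, h2A, hdiag⟩ :=
        gram_split Z hZ (fun x => x.1 ∈ A) (fun x => x.1 ∈ B) hZAB
      have hZapp : ∀ x y, Z x y = Z1 x y + Z2 x y := by
        intro x y; rw [hsum]; rfl
      have hins : ∀ x y, Z1 x y ≠ 0 ∨ Z2 x y ≠ 0 → x.1 ∈ s ∧ y.1 ∈ s := by
        intro x y hne
        by_cases hz : Z x y = 0
        · have h1 : Z1 x y ≠ 0 := by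
            intro h0
            have h2 : Z2 x y = 0 := by
              have h3 := hZapp x y
              rw [hz, h0] at h3
              linarith
            rcases hne with h | h
            · exact h h0
            · exact h h2
          have hx : Z x x ≠ 0 := fun h => h1 (hdiag x y h).1
          have hy : Z y y ≠ 0 := fun h => h1 (hdiag y x h).2
          exact ⟨(hsupp x x hx).1, (hsupp y y hy).1⟩
        · exact ⟨(hsupp x y hz).1, (hsupp x y hz).2.1⟩
      have hsupp1 : ∀ x y, Z1 x y ≠ 0 →
          x.1 ∈ A ∪ S ∧ y.1 ∈ A ∪ S ∧ (x.1 = y.1 ∨ G.Adj x.1 y.1) := by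
        intro x y h
        obtain ⟨hxs, hys⟩ := hins x y (Or.inl h)
        have hxB : x.1 ∉ B := fun hB => h (h1B x y (Or.inl hB))
        have hyB : y.1 ∉ B := fun hB => h (h1B x y (Or.inr hB))
        have hx1 : x.1 ∈ A ∪ S := by
          rcases hcover _ hxs with h' | h' | h'
          · exact Finset.mem_union.2 (Or.inr h')
          · exact Finset.mem_union.2 (Or.inl h')
          · exact absurd h' hxB
        have hy1 : y.1 ∈ A ∪ S := by
          rcases hcover _ hys with h' | h' | h'
          · exact Finset.mem_union.2 (Or.inr h')
          · exact Finset.mem_union.2 (Or.inl h')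
          · exact absurd h' hyB
        refine ⟨hx1, hy1, ?_⟩
        by_cases hA : x.1 ∈ A ∨ y.1 ∈ A
        · have hz2 : Z2 x y = 0 := h2A x y hA
          have hz : Z x y ≠ 0 := by
            rw [hZapp x y, hz2, add_zero]
            exact h
          exact (hsupp x y hz).2.2
        · push_neg at hA
          have hxS : x.1 ∈ S := by
            rcases Finset.mem_union.1 hx1 with h' | h'
            · exact absurd h' hA.1
            · exact h'
          have hyS : y.1 ∈ S := by
            rcases Finset.mem_union.1 hy1 with h' | h'
            · exact absurd h' hA.2
            · exact h'
          by_cases he : x.1 = y.1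
          · exact Or.inl he
          · exact Or.inr (hSclq (Finset.mem_coe.2 hxS) (Finset.mem_coe.2 hyS) he)
      have hsupp2 : ∀ x y, Z2 x y ≠ 0 →
          x.1 ∈ B ∪ S ∧ y.1 ∈ B ∪ S ∧ (x.1 = y.1 ∨ G.Adj x.1 y.1) := by
        intro x y h
        obtain ⟨hxs, hys⟩ := hins x y (Or.inr h)
        have hxA : x.1 ∉ A := fun hA => h (h2A x y (Or.inl hA))
        have hyA : y.1 ∉ A := fun hA => h (h2A x y (Or.inr hA))
        have hx1 : x.1 ∈ B ∪ S := by
          rcases hcover _ hxs with h' | h' | h'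
          · exact Finset.mem_union.2 (Or.inr h')
          · exact absurd h' hxA
          · exact Finset.mem_union.2 (Or.inl h')
        have hy1 : y.1 ∈ B ∪ S := by
          rcases hcover _ hys with h' | h' | h'
          · exact Finset.mem_union.2 (Or.inr h')
          · exact absurd h' hyA
          · exact Finset.mem_union.2 (Or.inl h')
        refine ⟨hx1, hy1, ?_⟩
        by_cases hB : x.1 ∈ B ∨ y.1 ∈ B
        · have hz1 : Z1 x y = 0 := h1B x y hB
          have hz : Z x y ≠ 0 := by
            rw [hZapp x y, hz1, zero_add]
            exact h
          exact (hsupp x y hz).2.2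
        · push_neg at hB
          have hxS : x.1 ∈ S := by
            rcases Finset.mem_union.1 hx1 with h' | h'
            · exact absurd h' hB.1
            · exact h'
          have hyS : y.1 ∈ S := by
            rcases Finset.mem_union.1 hy1 with h' | h'
            · exact absurd h' hB.2
            · exact h'
          by_cases he : x.1 = y.1
          · exact Or.inl he
          · exact Or.inr (hSclq (Finset.mem_coe.2 hxS) (Finset.mem_coe.2 hyS) he)
      have hsub1 : A ∪ S ⊆ s.erase b := by
        intro u hu
        rcases Finset.mem_union.1 hu with h' | h'
        · exact Finset.mem_erase.2 ⟨fun h => hAnB u h' (h ▸ hbB), hAs h'⟩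
        · exact Finset.mem_erase.2 ⟨fun h => hBnS b hbB (h ▸ h'), hSs h'⟩
      have hsub2 : B ∪ S ⊆ s.erase a := by
        intro u hu
        rcases Finset.mem_union.1 hu with h' | h'
        · exact Finset.mem_erase.2 ⟨fun h => hAnB a haA (h ▸ h'), hBs h'⟩
        · exact Finset.mem_erase.2 ⟨fun h => hAnS a haA (h ▸ h'), hSs h'⟩
      have hcard1 : (A ∪ S).card ≤ m := by
        have h1 := Finset.card_le_card hsub1
        rw [Finset.card_erase_of_mem hb] at h1
        omega
      have hcard2 : (B ∪ S).card ≤ m := by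
        have h1 := Finset.card_le_card hsub2
        rw [Finset.card_erase_of_mem ha] at h1
        omega
      obtain ⟨N1, M1, c1, hpsd1, hclq1, hmsupp1, hsum1⟩ := ih (A ∪ S) Z1 hcard1 hZ1 hsupp1
      obtain ⟨N2, M2, c2, hpsd2, hclq2, hmsupp2, hsum2⟩ := ih (B ∪ S) Z2 hcard2 hZ2 hsupp2
      refine ⟨N1 + N2, Fin.addCases M1 M2, Fin.addCases c1 c2, ?_, ?_, ?_, ?_⟩
      · intro t
        induction t using Fin.addCases with
        | left i => simp only [Fin.addCases_left]; exact hpsd1 i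
        | right i => simp only [Fin.addCases_right]; exact hpsd2 i
      · intro t
        induction t using Fin.addCases with
        | left i => simp only [Fin.addCases_left]; exact hclq1 i
        | right i => simp only [Fin.addCases_right]; exact hclq2 i
      · intro t
        induction t using Fin.addCases with
        | left i =>
          intro x y hxy
          simp only [Fin.addCases_left] at hxy ⊢
          exact hmsupp1 i x y hxy
        | right i =>
          intro x y hxy
          simp only [Fin.addCases_right] at hxy ⊢
          exact hmsupp2 i x y hxy
      · rw [hsum, hsum1, hsum2, Fin.sum_univ_add]
        congr 1
        · apply Finset.sum_congr rfl
          intro i _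
          simp only [Fin.addCases_left]
        · apply Finset.sum_congr rfl
          intro i _
          simp only [Fin.addCases_right]





lemma exists_maxClique_superset {V : Type*} [Fintype V] [DecidableEq V] (G : SimpleGraph V)
    (c : Finset V) (hc : G.IsClique (↑c : Set V)) : ∃ d, IsMaxClique G d ∧ c ⊆ d := by
  classical
  set fam := Finset.univ.powerset.filter (fun t : Finset V => G.IsClique (↑t : Set V) ∧ c ⊆ t) with hfam
  have hne : fam.Nonempty := ⟨c, by simp [hfam, hc]⟩
  obtain ⟨d, hd, hdmax⟩ := Finset.exists_max_image fam Finset.card hne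
  rw [hfam, Finset.mem_filter] at hd
  refine ⟨d, ⟨hd.2.1, ?_⟩, hd.2.2⟩
  intro t ht hdt
  have htf : t ∈ fam := by
    rw [hfam, Finset.mem_filter]
    exact ⟨Finset.mem_powerset.2 (Finset.subset_univ t), ht, hd.2.2.trans hdt⟩
  exact Finset.eq_of_subset_of_card_le hdt (hdmax t htf)

section IndexMatrix

variable {n : ℕ} (α : Fin n → ℕ) (C : Finset (Fin n))

lemma sigma_eq_iff (i j : Fin n) (a : Fin (α i)) (c : Fin (α j)) :
    (⟨i, a⟩ : (i : Fin n) × Fin (α i)) = ⟨j, c⟩ ↔ (i = j ∧ (a : ℕ) = (c : ℕ)) := by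
  constructor
  · intro h
    obtain ⟨h1, h2⟩ := Sigma.mk.inj_iff.1 h
    subst h1
    exact ⟨rfl, by rw [eq_of_heq h2]⟩
  · rintro ⟨rfl, h⟩
    rw [Fin.ext h]

lemma indexMatrix_apply (p : (i : {x : Fin n // x ∈ C}) × Fin (α i.1))
    (q : (i : Fin n) × Fin (α i)) :
    indexMatrix α C p q = if (⟨p.1.1, p.2⟩ : (i : Fin n) × Fin (α i)) = q then 1 else 0 := by
  obtain ⟨j, b⟩ := q
  show (if (p.1 : Fin n) = j ∧ (p.2 : ℕ) = (b : ℕ) then (1:ℝ) else 0) = _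
  exact if_congr (Iff.symm (sigma_eq_iff α p.1.1 j p.2 b)) rfl rfl

lemma emb_eq (p : (i : {x : Fin n // x ∈ C}) × Fin (α i.1)) (x : (i : Fin n) × Fin (α i))
    (hx : x.1 ∈ C) (h : (⟨p.1.1, p.2⟩ : (i : Fin n) × Fin (α i)) = x) :
    p = ⟨⟨x.1, hx⟩, x.2⟩ := by
  obtain ⟨⟨i, hi⟩, a⟩ := p
  obtain ⟨j, b⟩ := x
  obtain ⟨h1, h2⟩ := Sigma.mk.inj_iff.1 h
  dsimp at h1 h2 ⊢
  subst h1
  rw [eq_of_heq h2]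

lemma sum_emb (g : ((i : {x : Fin n // x ∈ C}) × Fin (α i.1)) → ℝ) (x : (i : Fin n) × Fin (α i)) :
    (∑ p, (if (⟨p.1.1, p.2⟩ : (i : Fin n) × Fin (α i)) = x then (1:ℝ) else 0) * g p) =
      if hx : x.1 ∈ C then g ⟨⟨x.1, hx⟩, x.2⟩ else 0 := by
  classical
  split_ifs with hx
  · rw [Finset.sum_eq_single (⟨⟨x.1, hx⟩, x.2⟩ : (i : {x : Fin n // x ∈ C}) × Fin (α i.1))]
    · rw [if_pos (by rw [Sigma.eta]), one_mul]
    · intro p _ hp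
      rw [if_neg, zero_mul]
      intro h
      exact hp (emb_eq α C p x hx h)
    · intro h
      exact absurd (Finset.mem_univ _) h
  · apply Finset.sum_eq_zero
    intro p _
    rw [if_neg, zero_mul]
    intro h
    exact hx (h ▸ p.1.2)

lemma expand_apply (Vm : Matrix ((i : {x : Fin n // x ∈ C}) × Fin (α i.1))
    ((i : {x : Fin n // x ∈ C}) × Fin (α i.1)) ℝ) (x y : (i : Fin n) × Fin (α i)) :
    ((indexMatrix α C)ᵀ * Vm * indexMatrix α C) x y =
      if hx : x.1 ∈ C then (if hy : y.1 ∈ C then Vm ⟨⟨x.1, hx⟩, x.2⟩ ⟨⟨y.1, hy⟩, y.2⟩ else 0)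
      else 0 := by
  classical
  rw [Matrix.mul_apply]
  have hterm : ∀ q, ((indexMatrix α C)ᵀ * Vm) x q * indexMatrix α C q y =
      (if (⟨q.1.1, q.2⟩ : (i : Fin n) × Fin (α i)) = y then (1:ℝ) else 0) *
        (((indexMatrix α C)ᵀ * Vm) x q) := by
    intro q
    rw [indexMatrix_apply, mul_comm]
  rw [Finset.sum_congr rfl (fun q _ => hterm q), sum_emb]
  have hinner : ∀ hy : y.1 ∈ C, ((indexMatrix α C)ᵀ * Vm) x ⟨⟨y.1, hy⟩, y.2⟩ =
      if hx : x.1 ∈ C then Vm ⟨⟨x.1, hx⟩, x.2⟩ ⟨⟨y.1, hy⟩, y.2⟩ else 0 := by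
    intro hy
    rw [Matrix.mul_apply]
    have h2 : ∀ p, (indexMatrix α C)ᵀ x p * Vm p ⟨⟨y.1, hy⟩, y.2⟩ =
        (if (⟨p.1.1, p.2⟩ : (i : Fin n) × Fin (α i)) = x then (1:ℝ) else 0) *
          Vm p ⟨⟨y.1, hy⟩, y.2⟩ := by
      intro p
      rw [Matrix.transpose_apply, indexMatrix_apply]
    rw [Finset.sum_congr rfl (fun p _ => h2 p), sum_emb]
  by_cases hy : y.1 ∈ C
  · rw [dif_pos hy, hinner hy]
    by_cases hx : x.1 ∈ C
    · rw [dif_pos hx, dif_pos hx, dif_pos hy]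
    · rw [dif_neg hx, dif_neg hx]
  · rw [dif_neg hy]
    by_cases hx : x.1 ∈ C
    · rw [dif_pos hx, dif_neg hy]
    · rw [dif_neg hx]

lemma compress_apply (Mm : Matrix ((i : Fin n) × Fin (α i)) ((i : Fin n) × Fin (α i)) ℝ)
    (p q : (i : {x : Fin n // x ∈ C}) × Fin (α i.1)) :
    (indexMatrix α C * Mm * (indexMatrix α C)ᵀ) p q =
      Mm ⟨p.1.1, p.2⟩ ⟨q.1.1, q.2⟩ := by
  classical
  rw [Matrix.mul_apply]
  have hterm : ∀ y, (indexMatrix α C * Mm) p y * (indexMatrix α C)ᵀ y q =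
      if (⟨q.1.1, q.2⟩ : (i : Fin n) × Fin (α i)) = y then (indexMatrix α C * Mm) p y
      else 0 := by
    intro y
    rw [Matrix.transpose_apply, indexMatrix_apply]
    split_ifs with h
    · rw [mul_one]
    · rw [mul_zero]
  rw [Finset.sum_congr rfl (fun y _ => hterm y), Finset.sum_ite_eq Finset.univ
    (⟨q.1.1, q.2⟩ : (i : Fin n) × Fin (α i)), if_pos (Finset.mem_univ _)]
  rw [Matrix.mul_apply]
  have hterm2 : ∀ x, indexMatrix α C p x * Mm x ⟨q.1.1, q.2⟩ =
      if (⟨p.1.1, p.2⟩ : (i : Fin n) × Fin (α i)) = x then Mm x ⟨q.1.1, q.2⟩ else 0 := by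
    intro x
    rw [indexMatrix_apply]
    split_ifs with h
    · rw [one_mul]
    · rw [zero_mul]
  rw [Finset.sum_congr rfl (fun x _ => hterm2 x), Finset.sum_ite_eq Finset.univ
    (⟨p.1.1, p.2⟩ : (i : Fin n) × Fin (α i)), if_pos (Finset.mem_univ _)]

lemma expand_compress (Mm : Matrix ((i : Fin n) × Fin (α i)) ((i : Fin n) × Fin (α i)) ℝ)
    (hsupp : ∀ x y, Mm x y ≠ 0 → x.1 ∈ C ∧ y.1 ∈ C) :
    (indexMatrix α C)ᵀ * (indexMatrix α C * Mm * (indexMatrix α C)ᵀ) * indexMatrix α C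
      = Mm := by
  ext x y
  rw [expand_apply]
  split_ifs with hx hy
  · rw [compress_apply]
  · by_contra h
    exact hy (hsupp x y (fun h0 => h h0.symm)).2
  · by_contra h
    exact hx (hsupp x y (fun h0 => h h0.symm)).1

lemma indexMatrix_conjTranspose :
    (indexMatrix α C)ᴴ = (indexMatrix α C)ᵀ := by
  ext p q
  simp [Matrix.conjTranspose_apply, Matrix.transpose_apply]

end IndexMatrix


end ChordalAux

open ChordalAux

set_option maxHeartbeats 2000000

/-- **Equivalence of the dual SDP and its chordally decomposed form.** Let `G` be a
chordal graph on `{1,…,n}` with maximal cliques `C_1, …, C_p`, and let `A_0, A_1, …, A_m`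
be symmetric matrices whose `α`-blocks vanish outside the pattern of `G`. Then `y` is
feasible for the dual SDP (`∃ Z ⪰ 0, Z + ∑ᵢ yᵢ Aᵢ = A_0`) iff there exist `V_k ⪰ 0` with
`∑ₖ E_{C_k}ᵀ V_k E_{C_k} + ∑ᵢ yᵢ Aᵢ = A_0`; consequently the two problems of maximizing
`⟨b, y⟩` over the respective feasible sets have the same optimal value (supremum, in the
extended reals). -/
theorem dual_sdp_chordal_decomposition
    {n p m : ℕ} (G : SimpleGraph (Fin n))
    (hchordal : IsChordal G)
    (C : Fin p → Finset (Fin n))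
    (hC : ∀ s : Finset (Fin n), IsMaxClique G s ↔ ∃ k, s = C k)
    (α : Fin n → ℕ)
    (A0 : Matrix ((i : Fin n) × Fin (α i)) ((i : Fin n) × Fin (α i)) ℝ)
    (A : Fin m → Matrix ((i : Fin n) × Fin (α i)) ((i : Fin n) × Fin (α i)) ℝ)
    (b : Fin m → ℝ)
    (hA0sym : A0.IsHermitian) (hAsym : ∀ l, (A l).IsHermitian)
    (hA0sparse : ∀ i j : Fin n, i ≠ j → ¬ G.Adj i j →
      ∀ (a : Fin (α i)) (c : Fin (α j)), A0 ⟨i, a⟩ ⟨j, c⟩ = 0)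
    (hAsparse : ∀ l, ∀ i j : Fin n, i ≠ j → ¬ G.Adj i j →
      ∀ (a : Fin (α i)) (c : Fin (α j)), A l ⟨i, a⟩ ⟨j, c⟩ = 0) :
    (∀ y : Fin m → ℝ,
      (∃ Z : Matrix ((i : Fin n) × Fin (α i)) ((i : Fin n) × Fin (α i)) ℝ,
          Z.PosSemidef ∧ Z + ∑ i, y i • A i = A0) ↔
      (∃ Vk : (k : Fin p) →
          Matrix ((i : {x : Fin n // x ∈ C k}) × Fin (α i.1))
                 ((i : {x : Fin n // x ∈ C k}) × Fin (α i.1)) ℝ,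
        (∀ k, (Vk k).PosSemidef) ∧
        (∑ k : Fin p, (indexMatrix α (C k))ᵀ * Vk k * indexMatrix α (C k)) +
          ∑ i, y i • A i = A0)) ∧
    sSup {v : EReal | ∃ y : Fin m → ℝ,
        (∃ Z : Matrix ((i : Fin n) × Fin (α i)) ((i : Fin n) × Fin (α i)) ℝ,
          Z.PosSemidef ∧ Z + ∑ i, y i • A i = A0) ∧
        v = ((∑ i, b i * y i : ℝ) : EReal)} =
    sSup {v : EReal | ∃ y : Fin m → ℝ,
        (∃ Vk : (k : Fin p) →
            Matrix ((i : {x : Fin n // x ∈ C k}) × Fin (α i.1))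
                   ((i : {x : Fin n // x ∈ C k}) × Fin (α i.1)) ℝ,
          (∀ k, (Vk k).PosSemidef) ∧
          (∑ k : Fin p, (indexMatrix α (C k))ᵀ * Vk k * indexMatrix α (C k)) +
            ∑ i, y i • A i = A0) ∧
        v = ((∑ i, b i * y i : ℝ) : EReal)} := by
  classical
  have hiff : ∀ y : Fin m → ℝ,
      (∃ Z : Matrix ((i : Fin n) × Fin (α i)) ((i : Fin n) × Fin (α i)) ℝ,
          Z.PosSemidef ∧ Z + ∑ i, y i • A i = A0) ↔
      (∃ Vk : (k : Fin p) →
          Matrix ((i : {x : Fin n // x ∈ C k}) × Fin (α i.1))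
                 ((i : {x : Fin n // x ∈ C k}) × Fin (α i.1)) ℝ,
        (∀ k, (Vk k).PosSemidef) ∧
        (∑ k : Fin p, (indexMatrix α (C k))ᵀ * Vk k * indexMatrix α (C k)) +
          ∑ i, y i • A i = A0) := by
    intro y
    constructor
    · rintro ⟨Z, hZpsd, hZeq⟩
      have hZsupp : ∀ x x' : (i : Fin n) × Fin (α i), Z x x' ≠ 0 →
          x.1 ∈ (Finset.univ : Finset (Fin n)) ∧ x'.1 ∈ (Finset.univ : Finset (Fin n)) ∧
          (x.1 = x'.1 ∨ G.Adj x.1 x'.1) := by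
        intro x x' h
        refine ⟨Finset.mem_univ _, Finset.mem_univ _, ?_⟩
        by_contra hcon
        push_neg at hcon
        obtain ⟨hne, hnadj⟩ := hcon
        apply h
        have happ := congrFun (congrFun hZeq x) x'
        have h0 : A0 x x' = 0 := by
          have h1 := hA0sparse x.1 x'.1 hne hnadj x.2 x'.2
          rwa [Sigma.eta, Sigma.eta] at h1
        have hAl : ∀ l, A l x x' = 0 := fun l => by
          have h1 := hAsparse l x.1 x'.1 hne hnadj x.2 x'.2
          rwa [Sigma.eta, Sigma.eta] at h1
        have hsum0 : (∑ i, y i • A i) x x' = 0 := by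
          rw [Matrix.sum_apply]
          apply Finset.sum_eq_zero
          intro i _
          rw [Matrix.smul_apply, hAl i, smul_zero]
        have : Z x x' + (∑ i, y i • A i) x x' = A0 x x' := happ
        rw [hsum0, h0] at this
        linarith
      obtain ⟨N, Mt, ct, hMpsd, hMclq, hMsupp, hMsum⟩ :=
        core_decomp hchordal α (Finset.univ : Finset (Fin n)).card Finset.univ Z le_rfl
          hZpsd hZsupp
      have hext : ∀ t, ∃ k0 : Fin p, ct t ⊆ C k0 := by
        intro t
        obtain ⟨d, hd, hcd⟩ := exists_maxClique_superset G (ct t) (hMclq t)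
        obtain ⟨k0, rfl⟩ := (hC d).1 hd
        exact ⟨k0, hcd⟩
      choose kf hkf using hext
      refine ⟨fun k0 => ∑ t ∈ Finset.univ.filter (fun t => kf t = k0),
        indexMatrix α (C k0) * Mt t * (indexMatrix α (C k0))ᵀ, ?_, ?_⟩
      · intro k0
        apply Finset.sum_induction _ _ (fun X Y hX hY => hX.add hY) Matrix.PosSemidef.zero
        intro t _
        rw [← indexMatrix_conjTranspose]
        exact (hMpsd t).mul_mul_conjTranspose_same _
      · have hZsum : (∑ k0 : Fin p, (indexMatrix α (C k0))ᵀ *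
            (∑ t ∈ Finset.univ.filter (fun t => kf t = k0),
              indexMatrix α (C k0) * Mt t * (indexMatrix α (C k0))ᵀ) * indexMatrix α (C k0))
            = Z := by
          have hVE : ∀ k0 : Fin p, (indexMatrix α (C k0))ᵀ *
              (∑ t ∈ Finset.univ.filter (fun t => kf t = k0),
                indexMatrix α (C k0) * Mt t * (indexMatrix α (C k0))ᵀ) * indexMatrix α (C k0)
              = ∑ t ∈ Finset.univ.filter (fun t => kf t = k0), Mt t := by
            intro k0
            rw [Matrix.mul_sum, Matrix.sum_mul]
            apply Finset.sum_congr rfl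
            intro t ht
            have hkt : kf t = k0 := (Finset.mem_filter.1 ht).2
            apply expand_compress
            intro x y' hxy
            have h1 := hMsupp t x y' hxy
            exact ⟨hkt ▸ hkf t h1.1, hkt ▸ hkf t h1.2⟩
          rw [Finset.sum_congr rfl (fun k0 _ => hVE k0), Finset.sum_fiberwise]
          exact hMsum.symm
        rw [hZsum]
        exact hZeq
    · rintro ⟨Vk, hVkpsd, hVkeq⟩
      refine ⟨∑ k0, (indexMatrix α (C k0))ᵀ * Vk k0 * indexMatrix α (C k0), ?_, hVkeq⟩
      apply Finset.sum_induction _ _ (fun X Y hX hY => hX.add hY) Matrix.PosSemidef.zero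
      intro k0 _
      rw [← indexMatrix_conjTranspose]
      exact (hVkpsd k0).conjTranspose_mul_mul_same _
  refine ⟨hiff, ?_⟩
  congr 1
  ext v
  constructor
  · rintro ⟨y, hy, hv⟩
    exact ⟨y, (hiff y).1 hy, hv⟩
  · rintro ⟨y, hy, hv⟩
    exact ⟨y, (hiff y).2 hy, hv⟩
end
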